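/- arXiv:1809.01084 — 9 statements merged into one kernel-verified Lean document; each statement's English description precedes it below -/
import Mathlib

section
/- Let B > 0 and 0 ≤ a₁ ≤ a₂ be real numbers. The function f(d₁, d₂) = B·(a₁·2^((d₁+d₂)/B) + (a₂ − a₁)·2^(d₂/B) − a₂) is convex on ℝ². -/
open Set

theorem convexOn_rpow_comp_linearMap {E : Type*} [AddCommGroup E] [Module ℝ E] {b : ℝ}
    (hb : 0 < b) (ℓ : E →ₗ[ℝ] ℝ) : ConvexOn ℝ univ (fun x => b ^ ℓ x) :=
  (convexOn_rpow_left hb).comp_linearMap ℓ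

/-- the per-group offloading power
`f(d₁,d₂) = B·(a₁·2^((d₁+d₂)/B) + (a₂−a₁)·2^(d₂/B) − a₂)` is convex on ℝ². -/
theorem stmt_2 (B a₁ a₂ : ℝ) (hB : 0 < B) (ha₁ : 0 ≤ a₁) (h12 : a₁ ≤ a₂) :
    ConvexOn ℝ Set.univ
      (fun p : ℝ × ℝ =>
        B * (a₁ * (2 : ℝ) ^ ((p.1 + p.2) / B)
          + (a₂ - a₁) * (2 : ℝ) ^ (p.2 / B) - a₂)) := by
  have hsum := convexOn_rpow_comp_linearMap two_pos
    (B⁻¹ • (LinearMap.fst ℝ ℝ ℝ + LinearMap.snd ℝ ℝ ℝ))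
  have hsnd := convexOn_rpow_comp_linearMap two_pos (B⁻¹ • LinearMap.snd ℝ ℝ ℝ)
  have hf := ((hsum.smul (mul_nonneg hB.le ha₁)).add
    (hsnd.smul (mul_nonneg hB.le (sub_nonneg.2 h12)))).add
    (convexOn_const (-(B * a₂)) convex_univ)
  refine hf.congr fun p _ => ?_
  simp only [Pi.add_apply, smul_eq_mul, LinearMap.smul_apply, LinearMap.add_apply,
    LinearMap.fst_apply, LinearMap.snd_apply, div_eq_inv_mul]
  ring
end

section
/- Let B > 0 and 0 ≤ a₁ ≤ a₂ be real numbers. The function (d₁, d₂, t) ↦ B·t·(a₁·2^((d₁+d₂)/(B·t)) + (a₂ − a₁)·2^(d₂/(B·t)) − a₂) is convex on the convex set {(d₁, d₂, t) ∈ ℝ³ : t > 0}. -/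
/-!
The energy is `a₁ P₁ + (a₂ - a₁) P₂` with nonnegative weights, where each `Pᵢ` is the
perspective `(x, s) ↦ s (2 ^ (x / s) - 1)` of the convex function `x ↦ 2 ^ x - 1`, precomposed
with the linear map `(d₁, d₂, t) ↦ (u d₁ + v d₂, B t)`. Perspectives of convex functions are
convex: on the segment from `(x, t)` to `(y, r)`, the point `(a x + b y) / (a t + b r)` is the
convex combination of `x / t` and `y / r` with weights proportional to `a t` and `b r`.
-/

open Set

section Perspective

variable {E : Type*} [AddCommGroup E] [Module ℝ E]

lemma inv_smul_add_smul_eq_combo {t r : ℝ} (ht : t ≠ 0) (hr : r ≠ 0) (a b : ℝ) (x y : E) :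
    (a * t + b * r)⁻¹ • (a • x + b • y) =
      (a * t / (a * t + b * r)) • (t⁻¹ • x) + (b * r / (a * t + b * r)) • (r⁻¹ • y) := by
  simp only [smul_add, smul_smul]
  congr 2 <;> field_simp

lemma ConvexOn.perspective {s : Set E} {g : E → ℝ} (hg : ConvexOn ℝ s g) :
    ConvexOn ℝ {p : E × ℝ | 0 < p.2 ∧ p.2⁻¹ • p.1 ∈ s} (fun p => p.2 * g (p.2⁻¹ • p.1)) := by
  have weights : ∀ {t r a b : ℝ}, 0 < t → 0 < r → 0 ≤ a → 0 ≤ b → a + b = 1 →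
      0 < a * t + b * r ∧ 0 ≤ a * t / (a * t + b * r) ∧ 0 ≤ b * r / (a * t + b * r) ∧
        a * t / (a * t + b * r) + b * r / (a * t + b * r) = 1 := by
    intro t r a b ht hr ha hb hab
    have hS : 0 < a * t + b * r := by simpa using convex_Ioi (0 : ℝ) ht hr ha hb hab
    exact ⟨hS, by positivity, by positivity, by rw [← add_div, div_self hS.ne']⟩
  refine ⟨?_, ?_⟩
  · rintro ⟨x, t⟩ ⟨ht, hx⟩ ⟨y, r⟩ ⟨hr, hy⟩ a b ha hb hab
    obtain ⟨hS, hα, hβ, hαβ⟩ := weights ht hr ha hb hab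
    refine ⟨by simpa using hS, ?_⟩
    simp only [Prod.smul_mk, Prod.mk_add_mk, smul_eq_mul]
    rw [inv_smul_add_smul_eq_combo ht.ne' hr.ne']
    exact hg.1 hx hy hα hβ hαβ
  · rintro ⟨x, t⟩ ⟨ht, hx⟩ ⟨y, r⟩ ⟨hr, hy⟩ a b ha hb hab
    obtain ⟨hS, hα, hβ, hαβ⟩ := weights ht hr ha hb hab
    simp only [Prod.smul_mk, Prod.mk_add_mk, smul_eq_mul]
    rw [inv_smul_add_smul_eq_combo ht.ne' hr.ne']
    calc (a * t + b * r) * g ((a * t / (a * t + b * r)) • (t⁻¹ • x)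
            + (b * r / (a * t + b * r)) • (r⁻¹ • y))
        ≤ (a * t + b * r) * ((a * t / (a * t + b * r)) • g (t⁻¹ • x)
            + (b * r / (a * t + b * r)) • g (r⁻¹ • y)) :=
          mul_le_mul_of_nonneg_left (hg.2 hx hy hα hβ hαβ) hS.le
      _ = a * (t * g (t⁻¹ • x)) + b * (r * g (r⁻¹ • y)) := by
          simp only [smul_eq_mul]
          field_simp

end Perspective

lemma convexOn_mul_two_rpow_div_sub_one (B u v : ℝ) (hB : 0 < B) :
    ConvexOn ℝ {p : ℝ × ℝ × ℝ | 0 < p.2.2}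
      (fun p => B * p.2.2 * ((2 : ℝ) ^ ((u * p.1 + v * p.2.1) / (B * p.2.2)) - 1)) := by
  let L : ℝ × ℝ × ℝ →ₗ[ℝ] ℝ × ℝ :=
    { toFun := fun p => (u * p.1 + v * p.2.1, B * p.2.2)
      map_add' := fun p q => by ext <;> simp only [Prod.fst_add, Prod.snd_add] <;> ring
      map_smul' := fun c p => by ext <;> simp only [Prod.smul_fst, Prod.smul_snd,
        smul_eq_mul, RingHom.id_apply] <;> ring }
  have hpersp := ((convexOn_rpow_left two_pos).add_const (-1)).perspective.comp_linearMap L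
  have hdom : L ⁻¹' {q : ℝ × ℝ | 0 < q.2 ∧ q.2⁻¹ • q.1 ∈ univ} = {p | 0 < p.2.2} := by
    ext p
    simp [L, hB]
  rw [hdom] at hpersp
  refine hpersp.congr fun p _ => ?_
  simp [L, div_eq_inv_mul, sub_eq_add_neg]

/-- the per-group offloading energy (the perspective of the offloading
power function) `(d₁,d₂,t) ↦ B·t·(a₁·2^((d₁+d₂)/(Bt)) + (a₂−a₁)·2^(d₂/(Bt)) − a₂)`
is convex on the convex set `{(d₁,d₂,t) : t > 0}`. -/
theorem stmt_3 (B a₁ a₂ : ℝ) (hB : 0 < B) (ha₁ : 0 ≤ a₁) (h12 : a₁ ≤ a₂) :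
    ConvexOn ℝ {p : ℝ × ℝ × ℝ | 0 < p.2.2}
      (fun p : ℝ × ℝ × ℝ =>
        B * p.2.2 * (a₁ * (2 : ℝ) ^ ((p.1 + p.2.1) / (B * p.2.2))
          + (a₂ - a₁) * (2 : ℝ) ^ (p.2.1 / (B * p.2.2)) - a₂)) := by
  have h := ((convexOn_mul_two_rpow_div_sub_one B 1 1 hB).smul ha₁).add
    ((convexOn_mul_two_rpow_div_sub_one B 0 1 hB).smul (sub_nonneg.2 h12))
  refine h.congr fun p _ => ?_
  simp only [Pi.add_apply, smul_eq_mul, one_mul, zero_mul, zero_add]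
  ring
end

section
/- (Lemma 1) Fix N ≥ 1 and, for each group i ∈ {1,…,N}, reals 0 ≤ a_{i1} ≤ a_{i2}, B > 0, and for j ∈ {1,2} reals R_{ij}, C_{ij}, P_{ij} ≥ 0. The total-energy objective V(d, t) = Σ_{i=1}^N B·t_i·(a_{i1}·2^((d_{i1}+d_{i2})/(B·t_i)) + (a_{i2} − a_{i1})·2^(d_{i2}/(B·t_i)) − a_{i2}) + Σ_{i=1}^N Σ_{j=1}^2 (R_{ij} − d_{ij})·C_{ij}·P_{ij} is a convex function of (d, t) ∈ ℝ^{2N} × ℝ^N on the convex set where t_i > 0 for all i. -/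
/-!
The offloading energy of group `i` is `B tᵢ · g((d_{i1}, d_{i2}) / (B tᵢ))` for
`g(u) = a_{i1} 2^(u₁ + u₂) + (a_{i2} - a_{i1}) 2^u₂ - a_{i2}`, i.e. the perspective of `g` evaluated
at the linear image `((d_{i1}, d_{i2}), B tᵢ)` of `(d, t)`. Since `a_{i1} ≥ 0` and `a_{i2} - a_{i1} ≥ 0`,
`g` is a nonnegative combination of convex exponentials, and perspectives of convex functions are
convex on `t > 0`. The local-computation energy is affine in `d`.
-/

theorem ConvexOn.sum {𝕜 E β ι : Type*} [Semiring 𝕜] [PartialOrder 𝕜] [AddCommMonoid E]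
    [AddCommMonoid β] [PartialOrder β] [IsOrderedAddMonoid β] [SMul 𝕜 E] [Module 𝕜 β]
    {s : Set E} {t : Finset ι} {f : ι → E → β} (hs : Convex 𝕜 s)
    (hf : ∀ i ∈ t, ConvexOn 𝕜 s (f i)) : ConvexOn 𝕜 s fun x => ∑ i ∈ t, f i x := by
  classical
  induction t using Finset.induction_on with
  | empty => simpa using convexOn_const (0 : β) hs
  | insert i t hi ih =>
    simp only [Finset.sum_insert hi]
    exact (hf i (Finset.mem_insert_self i t)).add
      (ih fun j hj => hf j (Finset.mem_insert_of_mem hj))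

section Perspective

variable {E : Type*} [AddCommGroup E] [Module ℝ E]

theorem inv_smul_combo_eq_combo_inv_smul (x y : E) {t u a b : ℝ} (ht : t ≠ 0) (hu : u ≠ 0)
    (hT : a * t + b * u ≠ 0) :
    (a * t + b * u)⁻¹ • (a • x + b • y) =
      (a * t / (a * t + b * u)) • (t⁻¹ • x) + (b * u / (a * t + b * u)) • (u⁻¹ • y) := by
  simp only [smul_smul, smul_add]
  congr 2 <;> field_simp

theorem ConvexOn.perspective_s4 {s : Set E} {f : E → ℝ} (hf : ConvexOn ℝ s f) :
    ConvexOn ℝ {q : E × ℝ | 0 < q.2 ∧ q.2⁻¹ • q.1 ∈ s} fun q => q.2 * f (q.2⁻¹ • q.1) := by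
  have hw : ∀ ⦃t u a b : ℝ⦄, 0 < a * t + b * u →
      a * t / (a * t + b * u) + b * u / (a * t + b * u) = 1 := by
    intro t u a b hT
    field_simp
  refine ⟨?_, ?_⟩ <;> rintro ⟨x, t⟩ ⟨ht, hx⟩ ⟨y, u⟩ ⟨hu, hy⟩ a b ha hb hab <;>
    have hT : 0 < a * t + b * u := convex_Ioi (0 : ℝ) ht hu ha hb hab <;>
    have hmix := inv_smul_combo_eq_combo_inv_smul x y ht.ne' hu.ne' hT.ne' <;>
    simp only [Prod.smul_mk, Prod.mk_add_mk, smul_eq_mul, Set.mem_ofPred_eq, hmix]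
  · exact ⟨hT, hf.1 hx hy (by positivity) (by positivity) (hw hT)⟩
  · calc (a * t + b * u) * f ((a * t / (a * t + b * u)) • (t⁻¹ • x) +
          (b * u / (a * t + b * u)) • (u⁻¹ • y))
        ≤ (a * t + b * u) * ((a * t / (a * t + b * u)) * f (t⁻¹ • x) +
          (b * u / (a * t + b * u)) * f (u⁻¹ • y)) :=
          mul_le_mul_of_nonneg_left (hf.2 hx hy (by positivity) (by positivity) (hw hT)) hT.le
      _ = a * (t * f (t⁻¹ • x)) + b * (u * f (u⁻¹ • y)) := by field_simp

end Perspective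

theorem convexOn_twoUserEnergy {a₁ a₂ : ℝ} (ha₁ : 0 ≤ a₁) (h12 : a₁ ≤ a₂) :
    ConvexOn ℝ Set.univ fun u : ℝ × ℝ =>
      a₁ * (2 : ℝ) ^ (u.1 + u.2) + (a₂ - a₁) * (2 : ℝ) ^ u.2 - a₂ := by
  have hexp := convexOn_rpow_left (b := 2) two_pos
  have hsum := (hexp.comp_linearMap (LinearMap.fst ℝ ℝ ℝ + LinearMap.snd ℝ ℝ ℝ)).smul ha₁
  have hsnd := (hexp.comp_linearMap (LinearMap.snd ℝ ℝ ℝ)).smul (sub_nonneg.2 h12)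
  refine ((hsum.add hsnd).add_const (-a₂)).congr fun u _ => ?_
  simp [sub_eq_add_neg]

section Coordinates

variable {N : ℕ}

def dataCoord (i : Fin N) (j : Fin 2) : (Fin N → Fin 2 → ℝ) × (Fin N → ℝ) →ₗ[ℝ] ℝ :=
  LinearMap.proj (R := ℝ) (φ := fun _ : Fin 2 => ℝ) j ∘ₗ
    LinearMap.proj (R := ℝ) (φ := fun _ : Fin N => Fin 2 → ℝ) i ∘ₗ LinearMap.fst ℝ _ _

def timeCoord (i : Fin N) : (Fin N → Fin 2 → ℝ) × (Fin N → ℝ) →ₗ[ℝ] ℝ :=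
  LinearMap.proj (R := ℝ) (φ := fun _ : Fin N => ℝ) i ∘ₗ LinearMap.snd ℝ _ _

@[simp] theorem dataCoord_apply (i : Fin N) (j : Fin 2) (p : (Fin N → Fin 2 → ℝ) × (Fin N → ℝ)) :
    dataCoord i j p = p.1 i j := rfl

@[simp] theorem timeCoord_apply (i : Fin N) (p : (Fin N → Fin 2 → ℝ) × (Fin N → ℝ)) :
    timeCoord i p = p.2 i := rfl

end Coordinates

theorem stmt_4_general (N : ℕ) (B : ℝ) (hB : 0 < B)
    (a₁ a₂ : Fin N → ℝ) (ha₁ : ∀ i, 0 ≤ a₁ i) (h12 : ∀ i, a₁ i ≤ a₂ i)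
    (R C P : Fin N → Fin 2 → ℝ) :
    ConvexOn ℝ {p : (Fin N → Fin 2 → ℝ) × (Fin N → ℝ) | ∀ i, 0 < p.2 i}
      (fun p =>
        (∑ i, B * p.2 i * (a₁ i * (2 : ℝ) ^ ((p.1 i 0 + p.1 i 1) / (B * p.2 i))
          + (a₂ i - a₁ i) * (2 : ℝ) ^ (p.1 i 1 / (B * p.2 i)) - a₂ i))
        + ∑ i, ∑ j, (R i j - p.1 i j) * C i j * P i j) := by
  have hS : Convex ℝ {p : (Fin N → Fin 2 → ℝ) × (Fin N → ℝ) | ∀ i, 0 < p.2 i} := by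
    rw [Set.ofPred_forall]
    exact convex_iInter fun i => convex_halfSpace_gt (timeCoord i).isLinear 0
  refine (ConvexOn.sum hS fun i _ => ?_).add
    (ConvexOn.sum hS fun i _ => ConvexOn.sum hS fun j _ => ?_)
  · have hgroup := (convexOn_twoUserEnergy (ha₁ i) (h12 i)).perspective_s4.comp_linearMap
      (((dataCoord i 0).prod (dataCoord i 1)).prod (B • timeCoord i))
    refine (hgroup.subset (fun p hp => ?_) hS).congr fun p _ => ?_
    · exact ⟨mul_pos hB (hp i), trivial⟩
    · simp [div_eq_inv_mul, mul_add]
  · refine ((convexOn_const (R i j * C i j * P i j) hS).sub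
      (((C i j * P i j) • dataCoord i j).concaveOn hS)).congr fun p _ => ?_
    simp only [LinearMap.coe_smul, Pi.sub_apply, Pi.smul_apply, dataCoord_apply, smul_eq_mul]
    ring

/-- Lemma 1: the total-energy objective
`V(d,t) = Σᵢ B·tᵢ·(a_{i1}·2^((d_{i1}+d_{i2})/(Btᵢ)) + (a_{i2}−a_{i1})·2^(d_{i2}/(Btᵢ)) − a_{i2})
        + Σᵢ Σⱼ (R_{ij} − d_{ij})·C_{ij}·P_{ij}`
is convex on the convex set where all `tᵢ > 0`. -/
theorem stmt_4 (N : ℕ) (hN : 1 ≤ N) (B : ℝ) (hB : 0 < B)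
    (a₁ a₂ : Fin N → ℝ) (ha₁ : ∀ i, 0 ≤ a₁ i) (h12 : ∀ i, a₁ i ≤ a₂ i)
    (R C P : Fin N → Fin 2 → ℝ) (hR : ∀ i j, 0 ≤ R i j)
    (hC : ∀ i j, 0 ≤ C i j) (hP : ∀ i j, 0 ≤ P i j) :
    ConvexOn ℝ {p : (Fin N → Fin 2 → ℝ) × (Fin N → ℝ) | ∀ i, 0 < p.2 i}
      (fun p =>
        (∑ i, B * p.2 i * (a₁ i * (2 : ℝ) ^ ((p.1 i 0 + p.1 i 1) / (B * p.2 i))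
          + (a₂ i - a₁ i) * (2 : ℝ) ^ (p.1 i 1 / (B * p.2 i)) - a₂ i))
        + ∑ i, ∑ j, (R i j - p.1 i j) * C i j * P i j) :=
  stmt_4_general N B hB a₁ a₂ ha₁ h12 R C P
end

section
/- Let B > 0, 0 < a₁ ≤ a₂ and d₁, d₂ ≥ 0 be reals with d₁ + d₂ > 0, and define g′(t) = a₁·(B − (ln 2)·(d₁+d₂)/t)·2^((d₁+d₂)/(B·t)) + (a₂ − a₁)·(B − (ln 2)·d₂/t)·2^(d₂/(B·t)) − a₂·B. Then g′ is strictly increasing on (0, ∞). -/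
/-!
With `c = log 2 · d / B`, each summand of `g′` is `B · (1 - c/t) · e^{c/t}`, whose derivative in `t`
is `B c² e^{c/t} / t³ ≥ 0`, strictly positive when `c ≠ 0`. So `g′` is a nonnegative combination
(`a₁ > 0`, `a₂ - a₁ ≥ 0`) of a strictly increasing and an increasing function.
-/

open Real Set

theorem hasDerivAt_one_sub_div_mul_exp_div (c : ℝ) {t : ℝ} (ht : t ≠ 0) :
    HasDerivAt (fun t => (1 - c / t) * exp (c / t)) (c ^ 2 * exp (c / t) / t ^ 3) t := by
  have hinv : HasDerivAt (fun t => c / t) (-c / t ^ 2) t := by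
    simpa [div_eq_mul_inv] using (hasDerivAt_inv ht).const_mul c
  refine ((hinv.const_sub 1).mul hinv.exp).congr_deriv ?_
  field_simp
  ring

theorem strictMonoOn_one_sub_div_mul_exp_div {c : ℝ} (hc : c ≠ 0) :
    StrictMonoOn (fun t => (1 - c / t) * exp (c / t)) (Ioi 0) := by
  refine strictMonoOn_of_deriv_pos (convex_Ioi 0) ?_ fun t ht => ?_
  · exact fun t ht => (hasDerivAt_one_sub_div_mul_exp_div c (ne_of_gt ht)).continuousAt
      |>.continuousWithinAt
  · rw [interior_Ioi] at ht
    rw [(hasDerivAt_one_sub_div_mul_exp_div c (ne_of_gt ht)).deriv]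
    have : (0 : ℝ) < t := ht
    positivity

theorem monotoneOn_one_sub_div_mul_exp_div (c : ℝ) :
    MonotoneOn (fun t => (1 - c / t) * exp (c / t)) (Ioi 0) := by
  rcases eq_or_ne c 0 with rfl | hc
  · simpa using monotoneOn_const
  · exact (strictMonoOn_one_sub_div_mul_exp_div hc).monotoneOn

theorem sub_log_two_mul_div_mul_two_rpow_eq {B : ℝ} (hB : B ≠ 0) (d t : ℝ) :
    (B - log 2 * d / t) * (2 : ℝ) ^ (d / (B * t)) =
      B * ((1 - log 2 * d / B / t) * exp (log 2 * d / B / t)) := by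
  rw [rpow_def_of_pos two_pos]
  rcases eq_or_ne t 0 with rfl | ht
  · simp
  · field_simp

theorem strictMonoOn_sub_log_two_mul_div_mul_two_rpow {B d : ℝ} (hB : 0 < B) (hd : d ≠ 0) :
    StrictMonoOn (fun t => (B - log 2 * d / t) * (2 : ℝ) ^ (d / (B * t))) (Ioi 0) := by
  simp only [sub_log_two_mul_div_mul_two_rpow_eq hB.ne']
  have hc : log 2 * d / B ≠ 0 := by positivity
  exact fun s hs t ht hst => mul_lt_mul_of_pos_left
    (strictMonoOn_one_sub_div_mul_exp_div hc hs ht hst) hB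

theorem monotoneOn_sub_log_two_mul_div_mul_two_rpow {B : ℝ} (hB : 0 < B) (d : ℝ) :
    MonotoneOn (fun t => (B - log 2 * d / t) * (2 : ℝ) ^ (d / (B * t))) (Ioi 0) := by
  simp only [sub_log_two_mul_div_mul_two_rpow_eq hB.ne']
  exact fun s hs t ht hst => mul_le_mul_of_nonneg_left
    (monotoneOn_one_sub_div_mul_exp_div _ hs ht hst) hB.le

theorem stmt_7_general (B a₁ a₂ d₁ d₂ : ℝ) (hB : 0 < B) (ha₁ : 0 < a₁) (h12 : a₁ ≤ a₂)
    (hdpos : 0 < d₁ + d₂) :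
    StrictMonoOn
      (fun t : ℝ =>
        a₁ * (B - Real.log 2 * (d₁ + d₂) / t) * (2 : ℝ) ^ ((d₁ + d₂) / (B * t))
          + (a₂ - a₁) * (B - Real.log 2 * d₂ / t) * (2 : ℝ) ^ (d₂ / (B * t))
          - a₂ * B)
      (Set.Ioi 0) := by
  intro s hs t ht hst
  have h₁ := strictMonoOn_sub_log_two_mul_div_mul_two_rpow hB hdpos.ne' hs ht hst
  have h₂ := monotoneOn_sub_log_two_mul_div_mul_two_rpow hB d₂ hs ht hst.le
  simp only [mul_assoc]
  linarith [mul_lt_mul_of_pos_left h₁ ha₁, mul_le_mul_of_nonneg_left h₂ (sub_nonneg.2 h12)]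

/-- the derivative `g′` of the per-group offloading energy is strictly
increasing on `(0, ∞)`. -/
theorem stmt_7 (B a₁ a₂ d₁ d₂ : ℝ) (hB : 0 < B) (ha₁ : 0 < a₁) (h12 : a₁ ≤ a₂)
    (hd₁ : 0 ≤ d₁) (hd₂ : 0 ≤ d₂) (hdpos : 0 < d₁ + d₂) :
    StrictMonoOn
      (fun t : ℝ =>
        a₁ * (B - Real.log 2 * (d₁ + d₂) / t) * (2 : ℝ) ^ ((d₁ + d₂) / (B * t))
          + (a₂ - a₁) * (B - Real.log 2 * d₂ / t) * (2 : ℝ) ^ (d₂ / (B * t))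
          - a₂ * B)
      (Set.Ioi 0) :=
  stmt_7_general B a₁ a₂ d₁ d₂ hB ha₁ h12 hdpos
end

section
/- Let B > 0, 0 < a₁ ≤ a₂ and d₁, d₂ ≥ 0 be reals with d₁ + d₂ > 0. Then for every t > 0, g′(t) = a₁·(B − (ln 2)·(d₁+d₂)/t)·2^((d₁+d₂)/(B·t)) + (a₂ − a₁)·(B − (ln 2)·d₂/t)·2^(d₂/(B·t)) − a₂·B < 0. -/
lemma key_le (y : ℝ) : (1 - y) * Real.exp y ≤ 1 := by
  have h1 : 1 - y ≤ Real.exp (-y) := by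
    have := Real.add_one_le_exp (-y); linarith
  have h2 : Real.exp (-y) * Real.exp y = 1 := by
    rw [← Real.exp_add]; simp
  nlinarith [Real.exp_pos y]

lemma key_lt (y : ℝ) (hy : y ≠ 0) : (1 - y) * Real.exp y < 1 := by
  have h1 : 1 - y < Real.exp (-y) := by
    have := Real.add_one_lt_exp (neg_ne_zero.mpr hy); linarith
  have h2 : Real.exp (-y) * Real.exp y = 1 := by
    rw [← Real.exp_add]; simp
  nlinarith [Real.exp_pos y]

/-- the derivative `g′` of the per-group offloading energy is negative
at every `t > 0`. -/
theorem stmt_8 (B a₁ a₂ d₁ d₂ : ℝ) (hB : 0 < B) (ha₁ : 0 < a₁) (h12 : a₁ ≤ a₂)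
    (hd₁ : 0 ≤ d₁) (hd₂ : 0 ≤ d₂) (hdpos : 0 < d₁ + d₂) :
    ∀ t : ℝ, 0 < t →
      a₁ * (B - Real.log 2 * (d₁ + d₂) / t) * (2 : ℝ) ^ ((d₁ + d₂) / (B * t))
        + (a₂ - a₁) * (B - Real.log 2 * d₂ / t) * (2 : ℝ) ^ (d₂ / (B * t))
        - a₂ * B < 0 := by
  intro t ht
  have hBt : 0 < B * t := mul_pos hB ht
  have hl2 : 0 < Real.log 2 := Real.log_pos (by norm_num)
  set y₁ := Real.log 2 * ((d₁ + d₂) / (B * t)) with hy1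
  set y₂ := Real.log 2 * (d₂ / (B * t)) with hy2
  have hy1pos : 0 < y₁ := mul_pos hl2 (div_pos hdpos hBt)
  have hy2nn : 0 ≤ y₂ := mul_nonneg hl2.le (div_nonneg hd₂ hBt.le)
  have e1 : (2 : ℝ) ^ ((d₁ + d₂) / (B * t)) = Real.exp y₁ := by
    rw [Real.rpow_def_of_pos (by norm_num)]
  have e2 : (2 : ℝ) ^ (d₂ / (B * t)) = Real.exp y₂ := by
    rw [Real.rpow_def_of_pos (by norm_num)]
  have c1 : B - Real.log 2 * (d₁ + d₂) / t = B * (1 - y₁) := by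
    rw [hy1]; field_simp
  have c2 : B - Real.log 2 * d₂ / t = B * (1 - y₂) := by
    rw [hy2]; field_simp
  rw [e1, e2, c1, c2]
  have k1 : (1 - y₁) * Real.exp y₁ < 1 := key_lt y₁ (ne_of_gt hy1pos)
  have k2 : (1 - y₂) * Real.exp y₂ ≤ 1 := key_le y₂
  nlinarith [mul_pos ha₁ hB, mul_nonneg (sub_nonneg.mpr h12) hB.le]
end

section
/- Let B > 0, 0 < a₁ ≤ a₂ and d₁, d₂ ≥ 0 be reals with d₁ + d₂ > 0. Then the per-group offloading energy g(t) = B·t·(a₁·2^((d₁+d₂)/(B·t)) + (a₂ − a₁)·2^(d₂/(B·t)) − a₂) is strictly decreasing on (0, ∞). -/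
/-- The slope of `2^x` through `0` is strictly monotone on positive reals. -/
lemma two_rpow_slope_mono {p q : ℝ} (hq : 0 < q) (hpq : q < p) :
    ((2:ℝ) ^ q - 1) / q < ((2:ℝ) ^ p - 1) / p := by
  have hl2 : (0:ℝ) < Real.log 2 := Real.log_pos (by norm_num)
  have key := strictConvexOn_exp.secant_strict_mono (a := 0)
    (x := q * Real.log 2) (y := p * Real.log 2) trivial trivial trivial
    (by positivity : (0:ℝ) < q * Real.log 2).ne' (mul_pos (hq.trans hpq) hl2).ne'
    (by nlinarith)
  simp only [Real.exp_zero, sub_zero] at key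
  have hq2 : (2:ℝ) ^ q = Real.exp (q * Real.log 2) := by
    rw [Real.rpow_def_of_pos (by norm_num), mul_comm]
  have hp2 : (2:ℝ) ^ p = Real.exp (p * Real.log 2) := by
    rw [Real.rpow_def_of_pos (by norm_num), mul_comm]
  rw [hq2, hp2]
  rw [div_mul_eq_div_div, div_mul_eq_div_div] at key
  exact (div_lt_div_iff_of_pos_right hl2).1 key

/-- Monotonicity of each summand `B t (2^{c/(Bt)} - 1)`. -/
lemma summand_anti {B c x y : ℝ} (hB : 0 < B) (hc : 0 ≤ c) (hx : 0 < x) (hxy : x < y) :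
    B * y * ((2:ℝ) ^ (c / (B * y)) - 1) ≤ B * x * ((2:ℝ) ^ (c / (B * x)) - 1) ∧
    (0 < c → B * y * ((2:ℝ) ^ (c / (B * y)) - 1) < B * x * ((2:ℝ) ^ (c / (B * x)) - 1)) := by
  have hy : 0 < y := hx.trans hxy
  rcases eq_or_lt_of_le hc with h0 | h0
  · simp [← h0]
  · have hBx : 0 < B * x := by positivity
    have hBy : 0 < B * y := by positivity
    set q : ℝ := c / (B * y) with hqdef
    set p : ℝ := c / (B * x) with hpdef
    have hq : 0 < q := by positivity
    have hpq : q < p := by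
      apply div_lt_div_of_pos_left h0 hBx
      exact (mul_lt_mul_iff_right₀ hB).2 hxy
    have h1 : B * y * ((2:ℝ) ^ q - 1) = c * (((2:ℝ) ^ q - 1) / q) := by
      rw [hqdef]; field_simp
    have h2 : B * x * ((2:ℝ) ^ p - 1) = c * (((2:ℝ) ^ p - 1) / p) := by
      rw [hpdef]; field_simp
    have hlt : B * y * ((2:ℝ) ^ q - 1) < B * x * ((2:ℝ) ^ p - 1) := by
      rw [h1, h2]
      exact (mul_lt_mul_iff_right₀ h0).2 (two_rpow_slope_mono hq hpq)
    exact ⟨hlt.le, fun _ => hlt⟩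

/-- the per-group offloading energy
`g(t) = B·t·(a₁·2^((d₁+d₂)/(Bt)) + (a₂−a₁)·2^(d₂/(Bt)) − a₂)` is strictly
decreasing on `(0, ∞)`. -/
theorem stmt_9 (B a₁ a₂ d₁ d₂ : ℝ) (hB : 0 < B) (ha₁ : 0 < a₁) (h12 : a₁ ≤ a₂)
    (hd₁ : 0 ≤ d₁) (hd₂ : 0 ≤ d₂) (hdpos : 0 < d₁ + d₂) :
    StrictAntiOn
      (fun t : ℝ =>
        B * t * (a₁ * (2 : ℝ) ^ ((d₁ + d₂) / (B * t))
          + (a₂ - a₁) * (2 : ℝ) ^ (d₂ / (B * t)) - a₂))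
      (Set.Ioi 0) := by
  intro x hx y hy hxy
  simp only [Set.mem_Ioi] at hx hy
  have h1 := summand_anti (c := d₁ + d₂) hB hdpos.le hx hxy
  have h2 := summand_anti (c := d₂) hB hd₂ hx hxy
  have hs1 : B * y * ((2:ℝ) ^ ((d₁ + d₂) / (B * y)) - 1)
      < B * x * ((2:ℝ) ^ ((d₁ + d₂) / (B * x)) - 1) := h1.2 hdpos
  have hs2 := h2.1
  have ha2 : 0 ≤ a₂ - a₁ := by linarith
  have key : a₁ * (B * y * ((2:ℝ) ^ ((d₁ + d₂) / (B * y)) - 1))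
      + (a₂ - a₁) * (B * y * ((2:ℝ) ^ (d₂ / (B * y)) - 1))
      < a₁ * (B * x * ((2:ℝ) ^ ((d₁ + d₂) / (B * x)) - 1))
      + (a₂ - a₁) * (B * x * ((2:ℝ) ^ (d₂ / (B * x)) - 1)) := by
    have := mul_le_mul_of_nonneg_left hs2 ha2
    nlinarith
  simp only
  nlinarith [key]
end

section
/- (Lemma 2) Fix N ≥ 1, B > 0, T > 0 and, for each i, reals 0 < a_{i1} ≤ a_{i2} and d_{i1}, d_{i2} ≥ 0 with d_{11} + d_{12} > 0. Suppose t ∈ ℝ^N has t_i > 0 for all i and Σ_{i=1}^N t_i < T. Define t̄ by t̄_1 = T − Σ_{i=2}^N t_i and t̄_i = t_i for i ≥ 2. Then t̄_i > 0 for all i, Σ_{i=1}^N t̄_i = T, and Σ_{i=1}^N g_i(t̄_i) < Σ_{i=1}^N g_i(t_i), where g_i(s) = B·s·(a_{i1}·2^((d_{i1}+d_{i2})/(B·s)) + (a_{i2} − a_{i1})·2^(d_{i2}/(B·s)) − a_{i2}). Consequently any time allocation with Σ t_i < T is not optimal for the total energy minimization, i.e., it is optimal to transmit with the maximal time Σ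 t_i = T. -/
open Real Set

/-! Writing `g_i(s) = a_{i1} φ_{d_{i1}+d_{i2}}(B s) + (a_{i2} - a_{i1}) φ_{d_{i2}}(B s)` with
`φ_x(s) = s (2^{x/s} - 1) = x · (2^u - 1)/u` at `u = x/s`, each `φ_x` is the perspective of the
convex function `u ↦ 2^u - 1` vanishing at `0`: its secant slopes through `0` increase, so `φ_x`
strictly decreases in `s` as soon as `x > 0`. Enlarging `t_1` to `t̄_1` therefore strictly lowers
`g_1` and leaves the other groups unchanged. -/

theorem strictConvexOn_rpow_left {b : ℝ} (hb₀ : 0 < b) (hb₁ : b ≠ 1) :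
    StrictConvexOn ℝ univ (fun x : ℝ => b ^ x) := by
  let ℓ := LinearMap.mul ℝ ℝ (log b)
  have hinj : InjOn ℓ univ := fun x _ y _ h =>
    mul_left_cancel₀ (log_ne_zero_of_pos_of_ne_one hb₀ hb₁) h
  convert (strictConvexOn_exp.subset (subset_univ _) (convex_univ.linear_image ℓ)).comp_convexOn
    (ℓ.convexOn convex_univ) (exp_monotone.monotoneOn _) hinj using 1
  ext x
  simp [ℓ, rpow_def_of_pos hb₀]

theorem strictMonoOn_rpow_sub_one_div {b : ℝ} (hb₀ : 0 < b) (hb₁ : b ≠ 1) :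
    StrictMonoOn (fun u : ℝ => (b ^ u - 1) / u) (Ioi 0) := by
  intro u hu v hv huv
  simpa using (strictConvexOn_rpow_left hb₀ hb₁).secant_strict_mono (mem_univ 0) (mem_univ u)
    (mem_univ v) (ne_of_gt hu) (ne_of_gt hv) huv

theorem strictAntiOn_mul_rpow_div_sub_one {b x : ℝ} (hb₀ : 0 < b) (hb₁ : b ≠ 1) (hx : 0 < x) :
    StrictAntiOn (fun s : ℝ => s * (b ^ (x / s) - 1)) (Ioi 0) := by
  intro s (hs : 0 < s) s' (hs' : 0 < s') hss'
  have hperspective : ∀ r : ℝ, 0 < r → r * (b ^ (x / r) - 1) = x * ((b ^ (x / r) - 1) / (x / r)) :=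
    fun r hr => by field_simp
  simp only [hperspective s hs, hperspective s' hs']
  exact mul_lt_mul_of_pos_left (strictMonoOn_rpow_sub_one_div hb₀ hb₁ (div_pos hx hs')
    (div_pos hx hs) (div_lt_div_of_pos_left hx hs hss')) hx

theorem antitoneOn_mul_rpow_div_sub_one {b x : ℝ} (hb₀ : 0 < b) (hb₁ : b ≠ 1) (hx : 0 ≤ x) :
    AntitoneOn (fun s : ℝ => s * (b ^ (x / s) - 1)) (Ioi 0) := by
  rcases hx.eq_or_lt with rfl | hx
  · intro s _ s' _ _
    simp
  · exact (strictAntiOn_mul_rpow_div_sub_one hb₀ hb₁ hx).antitoneOn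

noncomputable def offloadEnergy (B a₁ a₂ D₁ D₂ s : ℝ) : ℝ :=
  B * s * (a₁ * (2 : ℝ) ^ ((D₁ + D₂) / (B * s)) + (a₂ - a₁) * (2 : ℝ) ^ (D₂ / (B * s)) - a₂)

theorem offloadEnergy_eq (B a₁ a₂ D₁ D₂ s : ℝ) :
    offloadEnergy B a₁ a₂ D₁ D₂ s =
      a₁ * (B * s * ((2 : ℝ) ^ ((D₁ + D₂) / (B * s)) - 1))
        + (a₂ - a₁) * (B * s * ((2 : ℝ) ^ (D₂ / (B * s)) - 1)) := by
  unfold offloadEnergy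
  ring

theorem offloadEnergy_strictAntiOn {B a₁ a₂ D₁ D₂ : ℝ} (hB : 0 < B) (ha₁ : 0 < a₁)
    (h12 : a₁ ≤ a₂) (hD₂ : 0 ≤ D₂) (hD : 0 < D₁ + D₂) :
    StrictAntiOn (offloadEnergy B a₁ a₂ D₁ D₂) (Ioi 0) := by
  intro s (hs : 0 < s) s' (hs' : 0 < s') hss'
  have hBs : B * s ∈ Ioi 0 := mul_pos hB hs
  have hBs' : B * s' ∈ Ioi 0 := mul_pos hB hs'
  have hBss' : B * s < B * s' := mul_lt_mul_of_pos_left hss' hB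
  rw [offloadEnergy_eq, offloadEnergy_eq]
  exact add_lt_add_of_lt_of_le
    (mul_lt_mul_of_pos_left
      (strictAntiOn_mul_rpow_div_sub_one two_pos (by norm_num) hD hBs hBs' hBss') ha₁)
    (mul_le_mul_of_nonneg_left
      (antitoneOn_mul_rpow_div_sub_one two_pos (by norm_num) hD₂ hBs hBs' hBss'.le)
      (sub_nonneg.mpr h12))

theorem stmt_10_general (N : ℕ) (hN : 1 ≤ N) (B T : ℝ) (hB : 0 < B)
    (a₁ a₂ : Fin N → ℝ) (d : Fin N → Fin 2 → ℝ)
    (ha₁ : ∀ i, 0 < a₁ i) (h12 : ∀ i, a₁ i ≤ a₂ i) (hd : ∀ i j, 0 ≤ d i j)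
    (hd1 : 0 < d ⟨0, hN⟩ 0 + d ⟨0, hN⟩ 1)
    (g : Fin N → ℝ → ℝ)
    (hg : ∀ i (s : ℝ), g i s =
      B * s * (a₁ i * (2 : ℝ) ^ ((d i 0 + d i 1) / (B * s))
        + (a₂ i - a₁ i) * (2 : ℝ) ^ (d i 1 / (B * s)) - a₂ i))
    (t : Fin N → ℝ) (ht : ∀ i, 0 < t i) (hsum : ∑ i, t i < T)
    (tbar : Fin N → ℝ)
    (htbar0 : tbar ⟨0, hN⟩ = T - ∑ i ∈ Finset.univ.erase ⟨0, hN⟩, t i)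
    (htbar : ∀ i, i ≠ (⟨0, hN⟩ : Fin N) → tbar i = t i) :
    (∀ i, 0 < tbar i) ∧ (∑ i, tbar i = T) ∧
      ∑ i, g i (tbar i) < ∑ i, g i (t i) := by
  set i₀ : Fin N := ⟨0, hN⟩
  have hsplit := Finset.add_sum_erase Finset.univ t (Finset.mem_univ i₀)
  have hsplit_bar := Finset.add_sum_erase Finset.univ tbar (Finset.mem_univ i₀)
  have herase : ∑ i ∈ Finset.univ.erase i₀, tbar i = ∑ i ∈ Finset.univ.erase i₀, t i :=
    Finset.sum_congr rfl fun i hi => htbar i (Finset.ne_of_mem_erase hi)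
  have hgrow : t i₀ < tbar i₀ := by linarith
  have htbar_pos : ∀ i, 0 < tbar i := fun i => by
    by_cases h : i = i₀
    · rw [h]; exact (ht i₀).trans hgrow
    · rw [htbar i h]; exact ht i
  have hg_lt : g i₀ (tbar i₀) < g i₀ (t i₀) := by
    rw [hg, hg, ← offloadEnergy, ← offloadEnergy]
    exact offloadEnergy_strictAntiOn hB (ha₁ i₀) (h12 i₀) (hd i₀ 1) hd1
      (ht i₀) (htbar_pos i₀) hgrow
  refine ⟨htbar_pos, by linarith,
    Finset.sum_lt_sum (fun i _ => ?_) ⟨i₀, Finset.mem_univ _, hg_lt⟩⟩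
  by_cases h : i = i₀
  · rw [h]; exact hg_lt.le
  · rw [htbar i h]

/-- Lemma 2: if the time allocation `t` satisfies `Σᵢ tᵢ < T`, then
enlarging the time of group 1 to `t̄₁ = T − Σ_{i≥2} tᵢ` (keeping the others) gives a
feasible allocation using the full time `T` with strictly smaller total offloading
energy; hence it is optimal to transmit with the maximal time `Σᵢ tᵢ = T`. -/
theorem stmt_10 (N : ℕ) (hN : 1 ≤ N) (B T : ℝ) (hB : 0 < B) (hT : 0 < T)
    (a₁ a₂ : Fin N → ℝ) (d : Fin N → Fin 2 → ℝ)
    (ha₁ : ∀ i, 0 < a₁ i) (h12 : ∀ i, a₁ i ≤ a₂ i) (hd : ∀ i j, 0 ≤ d i j)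
    (hd1 : 0 < d ⟨0, hN⟩ 0 + d ⟨0, hN⟩ 1)
    (g : Fin N → ℝ → ℝ)
    (hg : ∀ i (s : ℝ), g i s =
      B * s * (a₁ i * (2 : ℝ) ^ ((d i 0 + d i 1) / (B * s))
        + (a₂ i - a₁ i) * (2 : ℝ) ^ (d i 1 / (B * s)) - a₂ i))
    (t : Fin N → ℝ) (ht : ∀ i, 0 < t i) (hsum : ∑ i, t i < T)
    (tbar : Fin N → ℝ)
    (htbar0 : tbar ⟨0, hN⟩ = T - ∑ i ∈ Finset.univ.erase ⟨0, hN⟩, t i)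
    (htbar : ∀ i, i ≠ (⟨0, hN⟩ : Fin N) → tbar i = t i) :
    (∀ i, 0 < tbar i) ∧ (∑ i, tbar i = T) ∧
      ∑ i, g i (tbar i) < ∑ i, g i (t i) :=
  stmt_10_general N hN B T hB a₁ a₂ d ha₁ h12 hd hd1 g hg t ht hsum tbar htbar0 htbar
end

section
/- (Theorem 1, sufficiency form) Fix N ≥ 1, B > 0, T > 0 and, for each i, reals 0 < a_{i1} ≤ a_{i2} and d_{i1}, d_{i2} ≥ 0 with d_{i1} + d_{i2} > 0, and let g_i(s) = B·s·(a_{i1}·2^((d_{i1}+d_{i2})/(B·s)) + (a_{i2} − a_{i1})·2^(d_{i2}/(B·s)) − a_{i2}) with derivative g_i′. Suppose t* ∈ ℝ^N satisfies t*_i > 0 for all i, Σ_{i=1}^N t*_i = T, and there exists α ∈ ℝ with g_i′(t*_i) = −α for every i. Then for every t ∈ ℝ^N with t_i > 0 for all i and Σ_{i=1}^N t_i ≤ T, one has Σ_{i=1}^N g_i(t*_i) ≤ Σ_{i=1}^N g_i(t_i); i.e., t* is the optimal time allocation of the energy minimization problem with fixed offloading data. -/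
/-!
Write `φ_b(x) = (1 - log b · x) b^x`, which is decreasing on `[0, ∞)` with `φ_b(0) = 1`. The
derivative of `s ↦ B s b^(c/(Bs))` is `B φ_b(c/(Bs))`, so each `g_i′` is a nonnegative combination
of such terms minus `a_{i2} B`: it is nondecreasing (hence `g_i` is convex) and nonpositive (hence
`α ≥ 0`). Convexity gives the tangent bound `g_i(t_i) ≥ g_i(t*_i) - α (t_i - t*_i)`; summing, the
error term `-α (Σ t_i - T)` is nonnegative since `t*` exhausts the budget.
-/

open Real Set

theorem ConvexOn.add_mul_sub_le_of_hasDerivAt {S : Set ℝ} {f : ℝ → ℝ} {f' x y : ℝ}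
    (hfc : ConvexOn ℝ S f) (hx : x ∈ S) (hy : y ∈ S) (hf : HasDerivAt f f' x) :
    f x + f' * (y - x) ≤ f y := by
  rcases lt_trichotomy x y with hxy | rfl | hyx
  · have h := hfc.le_slope_of_hasDerivAt hx hy hxy hf
    rw [slope_def_field, le_div_iff₀ (sub_pos.2 hxy)] at h
    linarith
  · simp only [sub_self, mul_zero, add_zero, le_refl]
  · have h := hfc.slope_le_of_hasDerivAt hy hx hyx hf
    rw [slope_def_field, div_le_iff₀ (sub_pos.2 hyx)] at h
    linarith

theorem Finset.sum_le_sum_of_le_add_mul_sub {ι : Type*} (s : Finset ι) {f : ι → ℝ → ℝ}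
    {x y : ι → ℝ} {μ : ℝ} (hμ : μ ≤ 0) (hf : ∀ i ∈ s, f i (x i) + μ * (y i - x i) ≤ f i (y i))
    (hxy : ∑ i ∈ s, y i ≤ ∑ i ∈ s, x i) :
    ∑ i ∈ s, f i (x i) ≤ ∑ i ∈ s, f i (y i) :=
  calc ∑ i ∈ s, f i (x i)
      ≤ ∑ i ∈ s, f i (x i) + μ * (∑ i ∈ s, y i - ∑ i ∈ s, x i) := by
        nlinarith
    _ = ∑ i ∈ s, (f i (x i) + μ * (y i - x i)) := by
        rw [Finset.sum_add_distrib, ← Finset.mul_sum, Finset.sum_sub_distrib]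
    _ ≤ ∑ i ∈ s, f i (y i) := Finset.sum_le_sum hf

section RateEnergy

variable {b B c s : ℝ}

theorem antitoneOn_one_sub_log_mul_mul_rpow (hb : 0 < b) :
    AntitoneOn (fun x : ℝ => (1 - log b * x) * b ^ x) (Ici 0) := by
  have hderiv : ∀ x : ℝ, HasDerivAt (fun x : ℝ => (1 - log b * x) * b ^ x)
      (-(log b ^ 2 * x * b ^ x)) x := fun x => by
    have h := (((hasDerivAt_id x).const_mul (log b)).const_sub 1).mul
      ((hasDerivAt_id x).const_rpow hb)
    exact h.congr_deriv (by simp only [id]; ring)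
  refine antitoneOn_of_deriv_nonpos (convex_Ici 0)
    (fun x _ => (hderiv x).continuousAt.continuousWithinAt)
    (fun x _ => (hderiv x).differentiableAt.differentiableWithinAt) fun x hx => ?_
  rw [interior_Ici] at hx
  rw [(hderiv x).deriv, neg_nonpos]
  exact mul_nonneg (mul_nonneg (sq_nonneg _) (le_of_lt hx)) (rpow_pos_of_pos hb x).le

theorem hasDerivAt_mul_rpow_div (hb : 0 < b) (hB : B ≠ 0) (hs : s ≠ 0) :
    HasDerivAt (fun s => B * s * b ^ (c / (B * s))) ((B - log b * c / s) * b ^ (c / (B * s))) s := by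
  have hexp : HasDerivAt (fun s => c / (B * s)) (c / B * -(s ^ 2)⁻¹) s := by
    have hfun : (fun s => c / (B * s)) = fun s => c / B * s⁻¹ := by
      ext u
      rw [div_mul_eq_div_div, div_eq_mul_inv (c / B)]
    rw [hfun]
    exact (hasDerivAt_inv hs).const_mul (c / B)
  have h := ((hasDerivAt_id s).const_mul B).mul (hexp.const_rpow hb)
  refine h.congr_deriv ?_
  simp only [id]
  field_simp
  ring

theorem sub_log_mul_div_mul_rpow_eq (hB : B ≠ 0) (hs : s ≠ 0) :
    (B - log b * c / s) * b ^ (c / (B * s))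
      = B * ((1 - log b * (c / (B * s))) * b ^ (c / (B * s))) := by
  field_simp

theorem sub_log_mul_div_mul_rpow_le (hb : 0 < b) (hB : 0 < B) (hc : 0 ≤ c) (hs : 0 < s) :
    (B - log b * c / s) * b ^ (c / (B * s)) ≤ B := by
  have hφ := antitoneOn_one_sub_log_mul_mul_rpow hb self_mem_Ici
    (mem_Ici.2 (by positivity : 0 ≤ c / (B * s))) (by positivity)
  simp only [mul_zero, sub_zero, rpow_zero, mul_one] at hφ
  rw [sub_log_mul_div_mul_rpow_eq hB.ne' hs.ne']
  nlinarith

theorem monotoneOn_sub_log_mul_div_mul_rpow (hb : 0 < b) (hB : 0 < B) (hc : 0 ≤ c) :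
    MonotoneOn (fun s => (B - log b * c / s) * b ^ (c / (B * s))) (Ioi 0) := by
  intro s (hs : 0 < s) u (hu : 0 < u) hsu
  have hφ := antitoneOn_one_sub_log_mul_mul_rpow hb
    (mem_Ici.2 (by positivity : 0 ≤ c / (B * u))) (mem_Ici.2 (by positivity : 0 ≤ c / (B * s)))
    (by gcongr)
  simp only
  rw [sub_log_mul_div_mul_rpow_eq hB.ne' hs.ne', sub_log_mul_div_mul_rpow_eq hB.ne' hu.ne']
  exact mul_le_mul_of_nonneg_left hφ hB.le

end RateEnergy

section NomaEnergy

variable {B a₁ a₂ c₁ c₂ s : ℝ}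

noncomputable def nomaEnergy (B a₁ a₂ c₁ c₂ s : ℝ) : ℝ :=
  B * s * (a₁ * (2 : ℝ) ^ (c₁ / (B * s)) + (a₂ - a₁) * (2 : ℝ) ^ (c₂ / (B * s)) - a₂)

noncomputable def nomaEnergyDeriv (B a₁ a₂ c₁ c₂ s : ℝ) : ℝ :=
  a₁ * (B - log 2 * c₁ / s) * (2 : ℝ) ^ (c₁ / (B * s))
    + (a₂ - a₁) * (B - log 2 * c₂ / s) * (2 : ℝ) ^ (c₂ / (B * s)) - a₂ * B

theorem hasDerivAt_nomaEnergy (hB : B ≠ 0) (hs : s ≠ 0) :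
    HasDerivAt (nomaEnergy B a₁ a₂ c₁ c₂) (nomaEnergyDeriv B a₁ a₂ c₁ c₂ s) s := by
  have h₁ := (hasDerivAt_mul_rpow_div (c := c₁) two_pos hB hs).const_mul a₁
  have h₂ := (hasDerivAt_mul_rpow_div (c := c₂) two_pos hB hs).const_mul (a₂ - a₁)
  have h₃ := (hasDerivAt_id s).const_mul (a₂ * B)
  refine (((h₁.add h₂).sub h₃).congr_deriv ?_).congr_of_eventuallyEq
    (Filter.Eventually.of_forall fun u => ?_)
  · simp only [nomaEnergyDeriv]
    ring
  · simp only [nomaEnergy, id, Pi.add_apply, Pi.sub_apply]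
    ring

theorem monotoneOn_nomaEnergyDeriv (hB : 0 < B) (ha₁ : 0 ≤ a₁) (h₁₂ : a₁ ≤ a₂) (hc₁ : 0 ≤ c₁)
    (hc₂ : 0 ≤ c₂) : MonotoneOn (nomaEnergyDeriv B a₁ a₂ c₁ c₂) (Ioi 0) := by
  intro s hs u hu hsu
  have h₁ := monotoneOn_sub_log_mul_div_mul_rpow two_pos hB hc₁ hs hu hsu
  have h₂ := monotoneOn_sub_log_mul_div_mul_rpow two_pos hB hc₂ hs hu hsu
  simp only [nomaEnergyDeriv, mul_assoc] at h₁ h₂ ⊢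
  gcongr ?_ + ?_ - _
  · exact mul_le_mul_of_nonneg_left h₁ ha₁
  · exact mul_le_mul_of_nonneg_left h₂ (sub_nonneg.2 h₁₂)

theorem nomaEnergyDeriv_nonpos (hB : 0 < B) (ha₁ : 0 ≤ a₁) (h₁₂ : a₁ ≤ a₂) (hc₁ : 0 ≤ c₁)
    (hc₂ : 0 ≤ c₂) (hs : 0 < s) : nomaEnergyDeriv B a₁ a₂ c₁ c₂ s ≤ 0 := by
  have h₁ := sub_log_mul_div_mul_rpow_le two_pos hB hc₁ hs
  have h₂ := sub_log_mul_div_mul_rpow_le two_pos hB hc₂ hs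
  have h₁₂' := sub_nonneg.2 h₁₂
  simp only [nomaEnergyDeriv, mul_assoc]
  nlinarith

theorem convexOn_nomaEnergy (hB : 0 < B) (ha₁ : 0 ≤ a₁) (h₁₂ : a₁ ≤ a₂) (hc₁ : 0 ≤ c₁)
    (hc₂ : 0 ≤ c₂) : ConvexOn ℝ (Ioi 0) (nomaEnergy B a₁ a₂ c₁ c₂) := by
  have hderiv : ∀ s ∈ Ioi (0 : ℝ),
      HasDerivAt (nomaEnergy B a₁ a₂ c₁ c₂) (nomaEnergyDeriv B a₁ a₂ c₁ c₂ s) s :=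
    fun s hs => hasDerivAt_nomaEnergy hB.ne' (ne_of_gt hs)
  refine MonotoneOn.convexOn_of_deriv (convex_Ioi 0)
    (fun s hs => (hderiv s hs).continuousAt.continuousWithinAt) ?_ ?_ <;> rw [interior_Ioi]
  · exact fun s hs => (hderiv s hs).differentiableAt.differentiableWithinAt
  · exact (monotoneOn_nomaEnergyDeriv hB ha₁ h₁₂ hc₁ hc₂).congr
      fun s hs => ((hderiv s hs).deriv).symm

end NomaEnergy

theorem stmt_11_general (N : ℕ) (hN : 1 ≤ N) (B T : ℝ) (hB : 0 < B)
    (a₁ a₂ : Fin N → ℝ) (d : Fin N → Fin 2 → ℝ)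
    (ha₁ : ∀ i, 0 < a₁ i) (h12 : ∀ i, a₁ i ≤ a₂ i) (hd : ∀ i j, 0 ≤ d i j)
    (g : Fin N → ℝ → ℝ)
    (hg : ∀ i (s : ℝ), g i s =
      B * s * (a₁ i * (2 : ℝ) ^ ((d i 0 + d i 1) / (B * s))
        + (a₂ i - a₁ i) * (2 : ℝ) ^ (d i 1 / (B * s)) - a₂ i))
    (g' : Fin N → ℝ → ℝ)
    (hg' : ∀ i (s : ℝ), g' i s =
      a₁ i * (B - Real.log 2 * (d i 0 + d i 1) / s) * (2 : ℝ) ^ ((d i 0 + d i 1) / (B * s))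
        + (a₂ i - a₁ i) * (B - Real.log 2 * (d i 1) / s) * (2 : ℝ) ^ (d i 1 / (B * s))
        - a₂ i * B)
    (tstar : Fin N → ℝ) (htstar : ∀ i, 0 < tstar i) (htsum : ∑ i, tstar i = T)
    (α : ℝ) (hα : ∀ i, g' i (tstar i) = -α) :
    ∀ t : Fin N → ℝ, (∀ i, 0 < t i) → ∑ i, t i ≤ T →
      ∑ i, g i (tstar i) ≤ ∑ i, g i (t i) := by
  intro t ht htle
  have hg_eq : ∀ i, g i = nomaEnergy B (a₁ i) (a₂ i) (d i 0 + d i 1) (d i 1) :=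
    fun i => funext (hg i)
  have hg'_eq : ∀ i, g' i = nomaEnergyDeriv B (a₁ i) (a₂ i) (d i 0 + d i 1) (d i 1) :=
    fun i => funext (hg' i)
  have hD : ∀ i, 0 ≤ d i 0 + d i 1 := fun i => add_nonneg (hd i 0) (hd i 1)
  have hα_nonneg : 0 ≤ α := by
    have i₀ : Fin N := ⟨0, hN⟩
    have h := nomaEnergyDeriv_nonpos hB (ha₁ i₀).le (h12 i₀) (hD i₀) (hd i₀ 1) (htstar i₀)
    rw [← hg'_eq, hα] at h
    linarith
  refine Finset.sum_le_sum_of_le_add_mul_sub _ (neg_nonpos.2 hα_nonneg) (fun i _ => ?_)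
    (htsum ▸ htle)
  rw [← hα i, hg_eq, hg'_eq]
  exact (convexOn_nomaEnergy hB (ha₁ i).le (h12 i) (hD i) (hd i 1)).add_mul_sub_le_of_hasDerivAt
    (htstar i) (ht i) (hasDerivAt_nomaEnergy hB.ne' (htstar i).ne')

/-- Theorem 1, sufficiency form: if `t*` uses the full time budget
`Σᵢ t*ᵢ = T` and the derivatives `gᵢ′(t*ᵢ)` all equal a common value `−α`, then `t*`
minimizes the total offloading energy `Σᵢ gᵢ(tᵢ)` among all positive time allocations
with `Σᵢ tᵢ ≤ T`. -/
theorem stmt_11 (N : ℕ) (hN : 1 ≤ N) (B T : ℝ) (hB : 0 < B) (hT : 0 < T)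
    (a₁ a₂ : Fin N → ℝ) (d : Fin N → Fin 2 → ℝ)
    (ha₁ : ∀ i, 0 < a₁ i) (h12 : ∀ i, a₁ i ≤ a₂ i) (hd : ∀ i j, 0 ≤ d i j)
    (hdpos : ∀ i, 0 < d i 0 + d i 1)
    (g : Fin N → ℝ → ℝ)
    (hg : ∀ i (s : ℝ), g i s =
      B * s * (a₁ i * (2 : ℝ) ^ ((d i 0 + d i 1) / (B * s))
        + (a₂ i - a₁ i) * (2 : ℝ) ^ (d i 1 / (B * s)) - a₂ i))
    (g' : Fin N → ℝ → ℝ)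
    (hg' : ∀ i (s : ℝ), g' i s =
      a₁ i * (B - Real.log 2 * (d i 0 + d i 1) / s) * (2 : ℝ) ^ ((d i 0 + d i 1) / (B * s))
        + (a₂ i - a₁ i) * (B - Real.log 2 * (d i 1) / s) * (2 : ℝ) ^ (d i 1 / (B * s))
        - a₂ i * B)
    (tstar : Fin N → ℝ) (htstar : ∀ i, 0 < tstar i) (htsum : ∑ i, tstar i = T)
    (α : ℝ) (hα : ∀ i, g' i (tstar i) = -α) :
    ∀ t : Fin N → ℝ, (∀ i, 0 < t i) → ∑ i, t i ≤ T →
      ∑ i, g i (tstar i) ≤ ∑ i, g i (t i) :=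
  stmt_11_general N hN B T hB a₁ a₂ d ha₁ h12 hd g hg g' hg' tstar htstar htsum α hα
end

section
/- Fix reals t > 0, B > 0, 0 < a₁ < a₂, C₁, C₂, P₁, P₂ and β ≥ 0 such that (P₁ − β)·C₁ > 0 and β·(C₁ − C₂) − P₁·C₁ + P₂·C₂ > 0. Define d₂ = B·t·log₂((β·(C₁ − C₂) − P₁·C₁ + P₂·C₂)/((ln 2)·(a₂ − a₁))) and d₁ = B·t·log₂((a₂ − a₁)·(P₁·C₁ − β·C₁)/(a₁·(β·(C₁ − C₂) − P₁·C₁ + P₂·C₂))). Then (d₁, d₂) is a stationary point of the Lagrangian, i.e., (ln 2)·a₁·2^((d₁+d₂)/(B·t)) + (β − P₁)·C₁ = 0 and (ln 2)·a₁·2^((d₁+d₂)/(B·t)) + (ln 2)·(a₂ − a₁)·2^(d₂/(B·t)) + (β − P₂)·C₂ = 0. -/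
open Real

lemma Real.rpow_mul_logb_div {b c x : ℝ} (hb : 0 < b) (hb₁ : b ≠ 1) (hc : c ≠ 0) (hx : 0 < x) :
    b ^ (c * logb b x / c) = x := by
  rw [mul_div_cancel_left₀ _ hc, rpow_logb hb hb₁ hx]

theorem stmt_14_general (t B a₁ a₂ C₁ C₂ P₁ P₂ β : ℝ)
    (ht : 0 < t) (hB : 0 < B) (ha₁ : 0 < a₁) (h12 : a₁ < a₂)
    (h1 : 0 < (P₁ - β) * C₁)
    (h2 : 0 < β * (C₁ - C₂) - P₁ * C₁ + P₂ * C₂)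
    (d₁ d₂ : ℝ)
    (hd₂ : d₂ = B * t * Real.logb 2
      ((β * (C₁ - C₂) - P₁ * C₁ + P₂ * C₂) / (Real.log 2 * (a₂ - a₁))))
    (hd₁ : d₁ = B * t * Real.logb 2
      ((a₂ - a₁) * (P₁ * C₁ - β * C₁)
        / (a₁ * (β * (C₁ - C₂) - P₁ * C₁ + P₂ * C₂)))) :
    Real.log 2 * a₁ * (2 : ℝ) ^ ((d₁ + d₂) / (B * t)) + (β - P₁) * C₁ = 0 ∧
    Real.log 2 * a₁ * (2 : ℝ) ^ ((d₁ + d₂) / (B * t))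
      + Real.log 2 * (a₂ - a₁) * (2 : ℝ) ^ (d₂ / (B * t))
      + (β - P₂) * C₂ = 0 := by
  set X := β * (C₁ - C₂) - P₁ * C₁ + P₂ * C₂
  have hBt : B * t ≠ 0 := by positivity
  have hlog : 0 < log 2 := log_pos one_lt_two
  have hgap : 0 < a₂ - a₁ := sub_pos.2 h12
  have hcost : 0 < P₁ * C₁ - β * C₁ := sub_mul P₁ β C₁ ▸ h1
  have e₂ : (2 : ℝ) ^ (d₂ / (B * t)) = X / (log 2 * (a₂ - a₁)) :=
    hd₂ ▸ rpow_mul_logb_div two_pos (by norm_num) hBt (by positivity)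
  have e₁ : (2 : ℝ) ^ (d₁ / (B * t))
      = (a₂ - a₁) * (P₁ * C₁ - β * C₁) / (a₁ * X) :=
    hd₁ ▸ rpow_mul_logb_div two_pos (by norm_num) hBt (by positivity)
  have e₁₂ : (2 : ℝ) ^ ((d₁ + d₂) / (B * t)) = (P₁ * C₁ - β * C₁) / (a₁ * log 2) := by
    rw [add_div, rpow_add two_pos, e₁, e₂]
    field_simp
  constructor
  · rw [e₁₂]; field_simp; ring
  · rw [e₁₂, e₂]; field_simp; ring

/-- the closed-form offloading data
`d₂ = B·t·log₂((β(C₁−C₂) − P₁C₁ + P₂C₂)/(ln2·(a₂−a₁)))` and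
`d₁ = B·t·log₂((a₂−a₁)(P₁C₁ − βC₁)/(a₁(β(C₁−C₂) − P₁C₁ + P₂C₂)))`
form a stationary point of the Lagrangian of the offloading-data subproblem. -/
theorem stmt_14 (t B a₁ a₂ C₁ C₂ P₁ P₂ β : ℝ)
    (ht : 0 < t) (hB : 0 < B) (ha₁ : 0 < a₁) (h12 : a₁ < a₂) (hβ : 0 ≤ β)
    (h1 : 0 < (P₁ - β) * C₁)
    (h2 : 0 < β * (C₁ - C₂) - P₁ * C₁ + P₂ * C₂)
    (d₁ d₂ : ℝ)
    (hd₂ : d₂ = B * t * Real.logb 2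
      ((β * (C₁ - C₂) - P₁ * C₁ + P₂ * C₂) / (Real.log 2 * (a₂ - a₁))))
    (hd₁ : d₁ = B * t * Real.logb 2
      ((a₂ - a₁) * (P₁ * C₁ - β * C₁)
        / (a₁ * (β * (C₁ - C₂) - P₁ * C₁ + P₂ * C₂)))) :
    Real.log 2 * a₁ * (2 : ℝ) ^ ((d₁ + d₂) / (B * t)) + (β - P₁) * C₁ = 0 ∧
    Real.log 2 * a₁ * (2 : ℝ) ^ ((d₁ + d₂) / (B * t))
      + Real.log 2 * (a₂ - a₁) * (2 : ℝ) ^ (d₂ / (B * t))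
      + (β - P₂) * C₂ = 0 :=
  stmt_14_general t B a₁ a₂ C₁ C₂ P₁ P₂ β ht hB ha₁ h12 h1 h2 d₁ d₂ hd₂ hd₁
end
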